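/- arXiv:1604.05759 — 7 statements merged into one kernel-verified Lean document; each statement's English description precedes it below -/
import Mathlib

section
/- Let −3 < ϱ < 0. There exists a constant C > 0 such that for every v ∈ ℝ³: C^{−1}(1 + |v|²)^{ϱ/2} ≤ ∫_{ℝ³} |u − v|^ϱ e^{−|u|²/2} du ≤ C(1 + |v|²)^{ϱ/2}. (This is the two-sided bound on the soft-potential collision frequency, which equals this integral up to the constant factor obtained by integrating the angular kernel over the sphere.) -/
/-!
Write `⟨x⟩ = (1 + ‖x‖²)^{1/2}`. Everything rests on Peetre's inequality `⟨x - y⟩² ≤ 2⟨x⟩²⟨y⟩²`.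

Lower bound: for `u ≠ v`, `‖u - v‖^ϱ ≥ ⟨u - v⟩^ϱ ≥ 2^{ϱ/2} ⟨u⟩^ϱ ⟨v⟩^ϱ`, so integrating against
the Gaussian leaves the positive constant `∫ ⟨u⟩^ϱ e^{-‖u‖²/2} du`.

Upper bound: `‖w‖^ϱ ≤ 2^{-ϱ/2} (1 + 𝟙_{‖w‖<1} ‖w‖^ϱ) ⟨w⟩^ϱ` separates the singularity from the
decay. Peetre turns `⟨u - v⟩^ϱ` into `⟨v⟩^ϱ ⟨u⟩^{-ϱ}`, and half of the Gaussian absorbs the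
polynomial weight `⟨u⟩^{-ϱ}`. What remains is integrable because `‖w‖^ϱ` is integrable on the unit
ball when `ϱ > -d`.
-/

open MeasureTheory Metric Real

lemma exists_exp_neg_div_le_mul_one_add_rpow (s : ℝ) {c : ℝ} (hc : 0 < c) :
    ∃ M, ∀ t, 0 ≤ t → exp (-t / c) ≤ M * (1 + t) ^ s := by
  obtain ⟨n, hn⟩ : ∃ n : ℕ, -s ≤ n := ⟨⌈-s⌉₊, Nat.le_ceil _⟩
  refine ⟨n.factorial * exp c⁻¹ * c ^ n, fun t ht => ?_⟩
  have hexp : ((1 + t) / c) ^ n / n.factorial ≤ exp ((1 + t) / c) :=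
    pow_div_factorial_le_exp _ (by positivity) n
  have hpow : ((1 + t) ^ n)⁻¹ ≤ (1 + t) ^ s := by
    rw [← rpow_natCast, ← rpow_neg (by linarith)]
    exact rpow_le_rpow_of_exponent_le (by linarith) (by linarith)
  calc exp (-t / c) = exp c⁻¹ / exp ((1 + t) / c) := by rw [← exp_sub]; ring_nf
    _ ≤ exp c⁻¹ / (((1 + t) / c) ^ n / n.factorial) := by gcongr
    _ = n.factorial * exp c⁻¹ * c ^ n * ((1 + t) ^ n)⁻¹ := by field_simp; rw [div_pow]; field_simp
    _ ≤ n.factorial * exp c⁻¹ * c ^ n * (1 + t) ^ s := by gcongr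

lemma rpow_eq_sq_rpow_half {x : ℝ} (hx : 0 ≤ x) (ϱ : ℝ) : x ^ ϱ = (x ^ 2) ^ (ϱ / 2) := by
  rw [← rpow_natCast, ← rpow_mul hx]; ring_nf

section JapaneseBracket

variable {E : Type*} [NormedAddCommGroup E]

lemma one_add_norm_sub_sq_le (x y : E) :
    1 + ‖x - y‖ ^ 2 ≤ 2 * ((1 + ‖x‖ ^ 2) * (1 + ‖y‖ ^ 2)) := by
  have := norm_sub_le x y
  nlinarith [norm_nonneg (x - y), norm_nonneg x, norm_nonneg y, sq_nonneg (‖x‖ - ‖y‖),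
    mul_nonneg (sq_nonneg ‖x‖) (sq_nonneg ‖y‖)]

/-- Peetre's inequality. -/
lemma one_add_norm_sq_rpow_mul_le {s : ℝ} (hs : s ≤ 0) (x y : E) :
    (1 + ‖x‖ ^ 2) ^ s * (1 + ‖y‖ ^ 2) ^ s ≤ 2 ^ (-s) * (1 + ‖x - y‖ ^ 2) ^ s := by
  have h := rpow_le_rpow_of_nonpos (by positivity) (one_add_norm_sub_sq_le x y) hs
  rw [mul_rpow (by norm_num) (by positivity), mul_rpow (by positivity) (by positivity)] at h
  rw [rpow_neg (by norm_num), ← div_eq_inv_mul, le_div_iff₀' (by positivity)]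
  exact h

lemma one_add_norm_sq_rpow_le_norm_rpow {ϱ : ℝ} (hϱ : ϱ ≤ 0) {w : E} (hw : 0 < ‖w‖) :
    (1 + ‖w‖ ^ 2) ^ (ϱ / 2) ≤ ‖w‖ ^ ϱ := by
  rw [rpow_eq_sq_rpow_half hw.le]
  exact rpow_le_rpow_of_nonpos (by positivity) (by linarith) (by linarith)

lemma norm_rpow_le_mul_one_add_norm_sq_rpow {ϱ : ℝ} (hϱ : ϱ ≤ 0) (w : E) :
    ‖w‖ ^ ϱ ≤
      2 ^ (-ϱ / 2) * (1 + (ball 0 1).indicator (‖·‖ ^ ϱ) w) * (1 + ‖w‖ ^ 2) ^ (ϱ / 2) := by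
  by_cases hw : ‖w‖ < 1
  · have : 1 ≤ 2 ^ (-ϱ / 2) * (1 + ‖w‖ ^ 2) ^ (ϱ / 2) := by
      rw [neg_div, rpow_neg (by norm_num), ← div_eq_inv_mul, le_div_iff₀ (by positivity),
        one_mul]
      exact rpow_le_rpow_of_nonpos (by positivity) (by nlinarith [norm_nonneg w]) (by linarith)
    rw [Set.indicator_of_mem (mem_ball_zero_iff.2 hw)]
    nlinarith [rpow_nonneg (norm_nonneg w) ϱ]
  · rw [Set.indicator_of_notMem (by simpa using hw), add_zero, mul_one,
      rpow_eq_sq_rpow_half (norm_nonneg w), neg_div, rpow_neg (by norm_num), ← div_eq_inv_mul,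
      le_div_iff₀' (by positivity), ← mul_rpow (by norm_num) (by positivity)]
    exact rpow_le_rpow_of_nonpos (by positivity) (by nlinarith) (by linarith)

lemma norm_sub_rpow_mul_exp_le {ϱ M : ℝ} (hϱ : ϱ ≤ 0)
    (hM : ∀ u : E, exp (-‖u‖ ^ 2 / 4) ≤ M * (1 + ‖u‖ ^ 2) ^ (ϱ / 2)) (u v : E) :
    ‖u - v‖ ^ ϱ * exp (-‖u‖ ^ 2 / 2) ≤ 2 ^ (-ϱ) * M * (1 + ‖v‖ ^ 2) ^ (ϱ / 2) *
      ((ball 0 1).indicator (‖·‖ ^ ϱ) (u - v) + exp (-‖u‖ ^ 2 / 4)) := by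
  set H := (ball (0 : E) 1).indicator (‖·‖ ^ ϱ) (u - v)
  have hH : 0 ≤ H := Set.indicator_nonneg (fun w _ => rpow_nonneg (norm_nonneg w) ϱ) _
  have hM0 : 0 ≤ M := zero_le_one.trans (by simpa using hM 0)
  have hexp : exp (-‖u‖ ^ 2 / 2) = exp (-‖u‖ ^ 2 / 4) * exp (-‖u‖ ^ 2 / 4) := by
    rw [← exp_add]; ring_nf
  have hexp_le : exp (-‖u‖ ^ 2 / 4) ≤ 1 := exp_le_one_iff.2 (by nlinarith)
  have hpeetre := one_add_norm_sq_rpow_mul_le (by linarith : ϱ / 2 ≤ 0) u (u - v)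
  rw [sub_sub_cancel] at hpeetre
  have htwo : (2 : ℝ) ^ (-ϱ) = 2 ^ (-ϱ / 2) * 2 ^ (-ϱ / 2) := by
    rw [← rpow_add (by norm_num)]; ring_nf
  calc ‖u - v‖ ^ ϱ * exp (-‖u‖ ^ 2 / 2)
      ≤ (2 ^ (-ϱ / 2) * (1 + H) * (1 + ‖u - v‖ ^ 2) ^ (ϱ / 2)) *
          ((M * (1 + ‖u‖ ^ 2) ^ (ϱ / 2)) * exp (-‖u‖ ^ 2 / 4)) := by
        rw [hexp]
        gcongr
        · exact norm_rpow_le_mul_one_add_norm_sq_rpow hϱ (u - v)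
        · exact hM u
    _ = 2 ^ (-ϱ / 2) * M * ((1 + H) * exp (-‖u‖ ^ 2 / 4)) *
          ((1 + ‖u‖ ^ 2) ^ (ϱ / 2) * (1 + ‖u - v‖ ^ 2) ^ (ϱ / 2)) := by ring
    _ ≤ 2 ^ (-ϱ / 2) * M * (H + exp (-‖u‖ ^ 2 / 4)) *
          (2 ^ (-(ϱ / 2)) * (1 + ‖v‖ ^ 2) ^ (ϱ / 2)) := by
        gcongr
        nlinarith
    _ = 2 ^ (-ϱ) * M * (1 + ‖v‖ ^ 2) ^ (ϱ / 2) * (H + exp (-‖u‖ ^ 2 / 4)) := by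
        rw [htwo, ← neg_div]; ring

lemma mul_rpow_mul_exp_le_norm_sub_rpow_mul_exp {ϱ : ℝ} (hϱ : ϱ ≤ 0) {u v : E} (huv : u ≠ v) :
    2 ^ (ϱ / 2) * (1 + ‖v‖ ^ 2) ^ (ϱ / 2) * ((1 + ‖u‖ ^ 2) ^ (ϱ / 2) * exp (-‖u‖ ^ 2 / 2)) ≤
      ‖u - v‖ ^ ϱ * exp (-‖u‖ ^ 2 / 2) := by
  have hpeetre := one_add_norm_sq_rpow_mul_le (by linarith : ϱ / 2 ≤ 0) u v
  have hnorm := one_add_norm_sq_rpow_le_norm_rpow hϱ (norm_pos_iff.2 (sub_ne_zero.2 huv))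
  rw [rpow_neg (by norm_num), ← div_eq_inv_mul, le_div_iff₀' (by positivity)] at hpeetre
  calc 2 ^ (ϱ / 2) * (1 + ‖v‖ ^ 2) ^ (ϱ / 2) * ((1 + ‖u‖ ^ 2) ^ (ϱ / 2) * exp (-‖u‖ ^ 2 / 2))
      = 2 ^ (ϱ / 2) * ((1 + ‖u‖ ^ 2) ^ (ϱ / 2) * (1 + ‖v‖ ^ 2) ^ (ϱ / 2)) *
          exp (-‖u‖ ^ 2 / 2) := by ring
    _ ≤ ‖u - v‖ ^ ϱ * exp (-‖u‖ ^ 2 / 2) := by gcongr; exact hpeetre.trans hnorm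

end JapaneseBracket

lemma integrable_indicator_ball_norm_rpow {F : Type*} [NormedAddCommGroup F] [NormedSpace ℝ F]
    [FiniteDimensional ℝ F] [Nontrivial F] [MeasurableSpace F] [BorelSpace F]
    (μ : Measure F) [μ.IsAddHaarMeasure] {ϱ : ℝ} (hϱ : -(Module.finrank ℝ F : ℝ) < ϱ) :
    Integrable ((ball (0 : F) 1).indicator (‖·‖ ^ ϱ)) μ := by
  refine (integrableOn_ball_of_norm_le_rpow (C := 1) (α := -ϱ) Module.finrank_pos (by linarith)
    (ae_of_all _ fun x => ?_) (measurable_norm.pow_const ϱ).aestronglyMeasurable)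
    |>.integrable_indicator measurableSet_ball
  simp [abs_of_nonneg (rpow_nonneg (norm_nonneg x) ϱ)]

section Gaussian

variable {V : Type*} [NormedAddCommGroup V] [InnerProductSpace ℝ V] [FiniteDimensional ℝ V]
  [MeasurableSpace V] [BorelSpace V]

lemma integrable_exp_neg_sq_norm_div {c : ℝ} (hc : 0 < c) :
    Integrable fun u : V => exp (-‖u‖ ^ 2 / c) := by
  refine Integrable.of_integral_ne_zero ?_
  have := GaussianFourier.integral_rexp_neg_mul_sq_norm (V := V) (inv_pos.2 hc)
  simp only [neg_mul, ← div_eq_inv_mul, ← neg_div] at this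
  rw [this]
  positivity

lemma integrable_one_add_norm_sq_rpow_mul_exp {s : ℝ} (hs : s ≤ 0) :
    Integrable fun u : V => (1 + ‖u‖ ^ 2) ^ s * exp (-‖u‖ ^ 2 / 2) := by
  refine (integrable_exp_neg_sq_norm_div two_pos).mono' (by fun_prop) (ae_of_all _ fun u => ?_)
  rw [norm_of_nonneg (by positivity)]
  exact mul_le_of_le_one_left (exp_pos _).le (rpow_le_one_of_one_le_of_nonpos (by nlinarith) hs)

lemma integral_one_add_norm_sq_rpow_mul_exp_pos {s : ℝ} (hs : s ≤ 0) :
    0 < ∫ u : V, (1 + ‖u‖ ^ 2) ^ s * exp (-‖u‖ ^ 2 / 2) := by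
  rw [integral_pos_iff_support_of_nonneg (fun u => by positivity)
      (integrable_one_add_norm_sq_rpow_mul_exp hs),
    Function.support_eq_univ fun u => (by positivity)]
  exact Measure.measure_univ_pos.2 (NeZero.ne volume)

lemma mul_le_integral_norm_sub_rpow_mul_exp [Nontrivial V] {ϱ : ℝ} (hϱ : ϱ ≤ 0) (v : V)
    (hint : Integrable fun u : V => ‖u - v‖ ^ ϱ * exp (-‖u‖ ^ 2 / 2)) :
    2 ^ (ϱ / 2) * (∫ u : V, (1 + ‖u‖ ^ 2) ^ (ϱ / 2) * exp (-‖u‖ ^ 2 / 2)) *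
        (1 + ‖v‖ ^ 2) ^ (ϱ / 2) ≤
      ∫ u : V, ‖u - v‖ ^ ϱ * exp (-‖u‖ ^ 2 / 2) := by
  rw [mul_right_comm, ← integral_const_mul]
  refine integral_mono_ae ((integrable_one_add_norm_sq_rpow_mul_exp (by linarith)).const_mul _)
    hint ?_
  filter_upwards [Measure.ae_ne volume v] with u hu
  exact mul_rpow_mul_exp_le_norm_sub_rpow_mul_exp hϱ hu

lemma exists_integral_norm_sub_rpow_mul_exp_le [Nontrivial V] {ϱ : ℝ}
    (hϱ₁ : -(Module.finrank ℝ V : ℝ) < ϱ) (hϱ₂ : ϱ ≤ 0) :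
    ∃ C, ∀ v : V, Integrable (fun u : V => ‖u - v‖ ^ ϱ * exp (-‖u‖ ^ 2 / 2)) ∧
      ∫ u : V, ‖u - v‖ ^ ϱ * exp (-‖u‖ ^ 2 / 2) ≤ C * (1 + ‖v‖ ^ 2) ^ (ϱ / 2) := by
  obtain ⟨M, hM⟩ := exists_exp_neg_div_le_mul_one_add_rpow (ϱ / 2) four_pos
  set H := (ball (0 : V) 1).indicator (‖·‖ ^ ϱ)
  have hH := integrable_indicator_ball_norm_rpow volume hϱ₁
  have hG := integrable_exp_neg_sq_norm_div (V := V) four_pos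
  refine ⟨2 ^ (-ϱ) * M * ((∫ w, H w) + ∫ u : V, exp (-‖u‖ ^ 2 / 4)), fun v => ?_⟩
  have hbound u := norm_sub_rpow_mul_exp_le hϱ₂ (fun u => hM _ (sq_nonneg ‖u‖)) u v
  have hdom : Integrable fun u => 2 ^ (-ϱ) * M * (1 + ‖v‖ ^ 2) ^ (ϱ / 2) *
      (H (u - v) + exp (-‖u‖ ^ 2 / 4)) := ((hH.comp_sub_right v).add hG).const_mul _
  have hint : Integrable fun u : V => ‖u - v‖ ^ ϱ * exp (-‖u‖ ^ 2 / 2) :=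
    hdom.mono' (by fun_prop) (ae_of_all _ fun u => by
      rw [norm_of_nonneg (by positivity)]; exact hbound u)
  refine ⟨hint, (integral_mono hint hdom hbound).trans_eq ?_⟩
  rw [integral_const_mul, integral_add (hH.comp_sub_right v) hG, integral_sub_right_eq_self]
  ring

end Gaussian

/-- Two-sided bound on the soft-potential collision frequency:
for `-3 < ϱ < 0` there is `C > 0` with
`C⁻¹ (1+|v|²)^{ϱ/2} ≤ ∫ |u - v|^ϱ e^{-|u|²/2} du ≤ C (1+|v|²)^{ϱ/2}`. -/
theorem collision_frequency_two_sided_bound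
    (ϱ : ℝ) (hϱ₁ : -3 < ϱ) (hϱ₂ : ϱ < 0) :
    ∃ C : ℝ, 0 < C ∧ ∀ v : EuclideanSpace ℝ (Fin 3),
      C⁻¹ * (1 + ‖v‖ ^ 2) ^ (ϱ / 2) ≤
        (∫ u : EuclideanSpace ℝ (Fin 3), ‖u - v‖ ^ ϱ * Real.exp (-‖u‖ ^ 2 / 2)) ∧
      (∫ u : EuclideanSpace ℝ (Fin 3), ‖u - v‖ ^ ϱ * Real.exp (-‖u‖ ^ 2 / 2)) ≤
        C * (1 + ‖v‖ ^ 2) ^ (ϱ / 2) := by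
  obtain ⟨C, hC⟩ := exists_integral_norm_sub_rpow_mul_exp_le (V := EuclideanSpace ℝ (Fin 3))
    (by simpa using hϱ₁) hϱ₂.le
  set c := 2 ^ (ϱ / 2) *
    ∫ u : EuclideanSpace ℝ (Fin 3), (1 + ‖u‖ ^ 2) ^ (ϱ / 2) * exp (-‖u‖ ^ 2 / 2)
  have hc : 0 < c :=
    mul_pos (by positivity) (integral_one_add_norm_sq_rpow_mul_exp_pos (by linarith))
  refine ⟨max C c⁻¹, lt_max_of_lt_right (inv_pos.2 hc), fun v => ⟨?_, ?_⟩⟩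
  · calc (max C c⁻¹)⁻¹ * (1 + ‖v‖ ^ 2) ^ (ϱ / 2) ≤ c * (1 + ‖v‖ ^ 2) ^ (ϱ / 2) := by
          gcongr; exact inv_le_of_inv_le₀ hc (le_max_right _ _)
      _ ≤ _ := mul_le_integral_norm_sub_rpow_mul_exp hϱ₂.le v (hC v).1
  · exact (hC v).2.trans (by gcongr; exact le_max_left _ _)
end

section
/- Let q > 0 and 0 < θ ≤ 2 (with 0 < q < 1 when θ = 2) and ϑ ≥ 0. Then for every t ≥ 0, all u, v ∈ ℝ³ and every unit vector ω ∈ ℝ³, the post-collisional velocities v′ = v + ((u−v)·ω)ω and u′ = u − ((u−v)·ω)ω satisfy w_{q/2,θ,ϑ}(t,v) ≤ (1/2)·(w_{q,θ,ϑ}(t,u′) + w_{q,θ,ϑ}(t,v′)), where w_{q/2,θ,ϑ} denotes the weight with parameter q replaced by q/2. -/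
noncomputable section

/-- Velocity space `ℝ³`. -/
abbrev V3 : Type := EuclideanSpace ℝ (Fin 3)

/-- Post-collisional velocity `v′ = v + ((u-v)·ω)ω`. -/
def vPost (u v ω : V3) : V3 := v + (inner ℝ (u - v) ω : ℝ) • ω

/-- Post-collisional velocity `u′ = u - ((u-v)·ω)ω`. -/
def uPost (u v ω : V3) : V3 := u - (inner ℝ (u - v) ω : ℝ) • ω

/-- Time–velocity weight `w_{q,θ,ϑ}(t,v) = exp(q|v|^θ/8 + q|v|^θ/(8(1+t)^ϑ))`. -/
def wt (q θ ϑ t : ℝ) (v : V3) : ℝ :=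
  Real.exp (q * ‖v‖ ^ θ / 8 + q * ‖v‖ ^ θ / (8 * (1 + t) ^ ϑ))

/-! Energy conservation `|u′|² + |v′|² = |u|² + |v|²` bounds `|v|²` by `|u′|² + |v′|²`, and
subadditivity of `s ↦ s ^ (θ / 2)` for `θ ≤ 2` turns this into `|v|^θ ≤ |u′|^θ + |v′|^θ`.
The weight is `exp (c q |v|^θ)` with `c ≥ 0`, so halving `q` halves the exponent, and
convexity of `exp` gives `exp ((a + b) / 2) ≤ (exp a + exp b) / 2`. -/

theorem norm_sub_inner_smul_sq_add_norm_add_inner_smul_sq {E : Type*} [NormedAddCommGroup E]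
    [InnerProductSpace ℝ E] (u v ω : E) (hω : ‖ω‖ = 1) :
    ‖u - inner ℝ (u - v) ω • ω‖ ^ 2 + ‖v + inner ℝ (u - v) ω • ω‖ ^ 2 = ‖u‖ ^ 2 + ‖v‖ ^ 2 := by
  rw [norm_sub_sq_real, norm_add_sq_real, real_inner_smul_right, real_inner_smul_right,
    norm_smul, hω, inner_sub_left, Real.norm_eq_abs]
  ring_nf
  rw [sq_abs]
  ring

theorem rpow_le_rpow_add_rpow_of_sq_le_sq_add_sq {x a b θ : ℝ} (hx : 0 ≤ x) (ha : 0 ≤ a)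
    (hb : 0 ≤ b) (hθ₀ : 0 ≤ θ) (hθ₂ : θ ≤ 2) (h : x ^ 2 ≤ a ^ 2 + b ^ 2) :
    x ^ θ ≤ a ^ θ + b ^ θ := by
  have hsq : ∀ y : ℝ, 0 ≤ y → y ^ θ = (y ^ 2) ^ (θ / 2) := fun y hy => by
    rw [← Real.rpow_natCast, ← Real.rpow_mul hy]
    norm_num [mul_div_cancel₀]
  rw [hsq x hx, hsq a ha, hsq b hb]
  calc (x ^ 2) ^ (θ / 2) ≤ (a ^ 2 + b ^ 2) ^ (θ / 2) :=
        Real.rpow_le_rpow (by positivity) h (by linarith)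
    _ ≤ (a ^ 2) ^ (θ / 2) + (b ^ 2) ^ (θ / 2) :=
        Real.rpow_add_le_add_rpow (by positivity) (by positivity) (by linarith) (by linarith)

theorem Real.exp_add_div_two_le (a b : ℝ) :
    Real.exp ((a + b) / 2) ≤ (Real.exp a + Real.exp b) / 2 := by
  have half_nonneg : (0 : ℝ) ≤ 1 / 2 := by norm_num
  calc Real.exp ((a + b) / 2) = Real.exp ((1 / 2 : ℝ) • a + (1 / 2 : ℝ) • b) := by
        simp only [smul_eq_mul]
        ring_nf
    _ ≤ (1 / 2 : ℝ) • Real.exp a + (1 / 2 : ℝ) • Real.exp b :=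
        convexOn_exp.2 (Set.mem_univ a) (Set.mem_univ b) half_nonneg half_nonneg (by norm_num)
    _ = (Real.exp a + Real.exp b) / 2 := by
        simp only [smul_eq_mul]
        ring

theorem wt_eq_exp (q θ ϑ t : ℝ) (v : V3) :
    wt q θ ϑ t v = Real.exp (q * ((1 + ((1 + t) ^ ϑ)⁻¹) / 8) * ‖v‖ ^ θ) := by
  rw [wt]
  congr 1
  ring

theorem weight_le_half_add_post_collision_general
    (q θ ϑ : ℝ) (hq : 0 < q) (hθ₁ : 0 < θ) (hθ₂ : θ ≤ 2)
    (t : ℝ) (ht : 0 ≤ t) (u v ω : V3) (hω : ‖ω‖ = 1) :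
    wt (q / 2) θ ϑ t v ≤ (1 / 2) * (wt q θ ϑ t (uPost u v ω) + wt q θ ϑ t (vPost u v ω)) := by
  have henergy : ‖v‖ ^ 2 ≤ ‖uPost u v ω‖ ^ 2 + ‖vPost u v ω‖ ^ 2 := by
    rw [uPost, vPost, norm_sub_inner_smul_sq_add_norm_add_inner_smul_sq u v ω hω]
    exact le_add_of_nonneg_left (sq_nonneg _)
  have hsplit : ‖v‖ ^ θ ≤ ‖uPost u v ω‖ ^ θ + ‖vPost u v ω‖ ^ θ :=
    rpow_le_rpow_add_rpow_of_sq_le_sq_add_sq (norm_nonneg _) (norm_nonneg _) (norm_nonneg _)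
      hθ₁.le hθ₂ henergy
  have hc : 0 ≤ (1 + ((1 + t) ^ ϑ)⁻¹) / 8 := by
    have := Real.rpow_nonneg (by linarith : (0 : ℝ) ≤ 1 + t) ϑ
    positivity
  rw [wt_eq_exp, wt_eq_exp, wt_eq_exp]
  generalize (1 + ((1 + t) ^ ϑ)⁻¹) / 8 = c at hc ⊢
  calc Real.exp (q / 2 * c * ‖v‖ ^ θ)
      ≤ Real.exp ((q * c * ‖uPost u v ω‖ ^ θ + q * c * ‖vPost u v ω‖ ^ θ) / 2) := by
        gcongr
        nlinarith [mul_le_mul_of_nonneg_left hsplit (mul_nonneg hq.le hc)]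
    _ ≤ (Real.exp (q * c * ‖uPost u v ω‖ ^ θ) + Real.exp (q * c * ‖vPost u v ω‖ ^ θ)) / 2 :=
        Real.exp_add_div_two_le _ _
    _ = _ := by ring

/-- Weight splitting along collisions: `w_{q/2,θ,ϑ}(t,v) ≤ ½ (w_{q,θ,ϑ}(t,u′) + w_{q,θ,ϑ}(t,v′))`
for all unit vectors `ω`. -/
theorem weight_le_half_add_post_collision
    (q θ ϑ : ℝ) (hq : 0 < q) (hθ₁ : 0 < θ) (hθ₂ : θ ≤ 2)
    (hqθ : θ = 2 → q < 1) (hϑ : 0 ≤ ϑ)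
    (t : ℝ) (ht : 0 ≤ t) (u v ω : V3) (hω : ‖ω‖ = 1) :
    wt (q / 2) θ ϑ t v ≤ (1 / 2) * (wt q θ ϑ t (uPost u v ω) + wt q θ ϑ t (vPost u v ω)) :=
  weight_le_half_add_post_collision_general q θ ϑ hq hθ₁ hθ₂ t ht u v ω hω
end
end

section
/- Let −3 < ϱ < 0, 0 < θ ≤ 2, q > 0 and c > 0, and set ρ₀ = θ/(θ − ϱ), so 0 < ρ₀ < 1. Then there exist λ₀ > 0 and C ≥ 1 such that for all v ∈ ℝ³ and all t ≥ 0: exp(−c(1+|v|²)^{ϱ/2} t) · exp(−q|v|^θ/8) ≤ C · exp(−λ₀ t^{ρ₀}). -/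
/-!
Put `ρ₀ = θ/(θ - ϱ)` and `R = t^{1/(θ - ϱ)}`, so that `R^θ = t^{ρ₀}` and `R^ϱ t = t^{ρ₀}`.
For `t ≤ 1` the factor `exp(-λ₀ t^{ρ₀}) ≥ exp(-λ₀)` is absorbed into `C = exp λ₀`.
For `t ≥ 1`, either
`|v| ≥ R`, and then the weight `exp(-q|v|^θ/8)` alone gives `exp(-(q/8) t^{ρ₀})`, or `|v| ≤ R`,
and then `1 + |v|² ≤ 2R²` bounds the collision frequency below by `c 2^{ϱ/2} R^ϱ`, so that
its exponential gives `exp(-c 2^{ϱ/2} t^{ρ₀})`.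
-/

open Real

lemma two_rpow_mul_rpow_le_one_add_sq_rpow {ϱ s R : ℝ} (hϱ : ϱ ≤ 0) (hs : 0 ≤ s)
    (hsR : s ≤ R) (hR : 1 ≤ R) :
    2 ^ (ϱ / 2) * R ^ ϱ ≤ (1 + s ^ 2) ^ (ϱ / 2) := by
  have hR₀ : 0 ≤ R := zero_le_one.trans hR
  have hle : 1 + s ^ 2 ≤ 2 * R ^ 2 := by nlinarith
  calc 2 ^ (ϱ / 2) * R ^ ϱ = (2 * R ^ 2) ^ (ϱ / 2) := by
        rw [mul_rpow zero_le_two (by positivity), ← rpow_natCast, ← rpow_mul hR₀]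
        push_cast
        ring_nf
    _ ≤ (1 + s ^ 2) ^ (ϱ / 2) := rpow_le_rpow_of_nonpos (by positivity) hle (by linarith)

lemma two_rpow_mul_rpow_le_one_add_sq_rpow_mul {ϱ θ s t : ℝ} (hϱ : ϱ ≤ 0) (hθ : 0 < θ)
    (hs : 0 ≤ s) (ht : 1 ≤ t) (hst : s ^ θ ≤ t ^ (θ / (θ - ϱ))) :
    2 ^ (ϱ / 2) * t ^ (θ / (θ - ϱ)) ≤ (1 + s ^ 2) ^ (ϱ / 2) * t := by
  have hθϱ : 0 < θ - ϱ := by linarith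
  have ht₀ : 0 ≤ t := zero_le_one.trans ht
  set R := t ^ (θ - ϱ)⁻¹
  have hRθ : R ^ θ = t ^ (θ / (θ - ϱ)) := by rw [← rpow_mul ht₀, inv_mul_eq_div]
  have hsR : s ≤ R := by
    rwa [← hRθ, rpow_le_rpow_iff hs (by positivity) hθ] at hst
  have hRt : R ^ ϱ * t = t ^ (θ / (θ - ϱ)) := by
    rw [← rpow_mul ht₀, ← rpow_add_one (zero_lt_one.trans_le ht).ne']
    congr 1
    field_simp
    ring
  calc 2 ^ (ϱ / 2) * t ^ (θ / (θ - ϱ)) = 2 ^ (ϱ / 2) * R ^ ϱ * t := by rw [mul_assoc, hRt]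
    _ ≤ (1 + s ^ 2) ^ (ϱ / 2) * t := by
        gcongr
        exact two_rpow_mul_rpow_le_one_add_sq_rpow hϱ hs hsR
          (one_le_rpow ht (inv_nonneg.2 hθϱ.le))

lemma mul_rpow_le_collision_freq_mul_add {ϱ θ a c lam s t : ℝ} (hϱ : ϱ ≤ 0) (hθ : 0 < θ)
    (hlam : 0 ≤ lam) (hlam_a : lam ≤ a) (hlam_c : lam ≤ c * 2 ^ (ϱ / 2)) (hs : 0 ≤ s)
    (ht : 0 ≤ t) :
    lam * t ^ (θ / (θ - ϱ)) ≤ c * (1 + s ^ 2) ^ (ϱ / 2) * t + a * s ^ θ + lam := by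
  have hρ₀ : 0 < θ / (θ - ϱ) := div_pos hθ (by linarith)
  have hc : 0 ≤ c := nonneg_of_mul_nonneg_left (hlam.trans hlam_c) (by positivity)
  have hfreq : 0 ≤ c * (1 + s ^ 2) ^ (ϱ / 2) * t := by positivity
  have hweight : 0 ≤ a * s ^ θ := mul_nonneg (hlam.trans hlam_a) (by positivity)
  rcases le_total t 1 with ht₁ | ht₁
  · have : lam * t ^ (θ / (θ - ϱ)) ≤ lam :=
      mul_le_of_le_one_right hlam (rpow_le_one ht ht₁ hρ₀.le)
    linarith
  rcases le_total (t ^ (θ / (θ - ϱ))) (s ^ θ) with hts | hst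
  · have : lam * t ^ (θ / (θ - ϱ)) ≤ a * s ^ θ :=
      mul_le_mul hlam_a hts (by positivity) (hlam.trans hlam_a)
    linarith
  · have : lam * t ^ (θ / (θ - ϱ)) ≤ c * (1 + s ^ 2) ^ (ϱ / 2) * t :=
      calc lam * t ^ (θ / (θ - ϱ)) ≤ c * (2 ^ (ϱ / 2) * t ^ (θ / (θ - ϱ))) := by
            rw [← mul_assoc]; gcongr
        _ ≤ c * ((1 + s ^ 2) ^ (ϱ / 2) * t) := by
            exact mul_le_mul_of_nonneg_left
              (two_rpow_mul_rpow_le_one_add_sq_rpow_mul hϱ hθ hs ht₁ hst) hc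
        _ = c * (1 + s ^ 2) ^ (ϱ / 2) * t := (mul_assoc _ _ _).symm
    linarith

theorem exp_collision_freq_weight_decay_general
    (ϱ θ q c ρ₀ : ℝ) (hϱ₂ : ϱ < 0) (hθ₁ : 0 < θ)
    (hq : 0 < q) (hc : 0 < c) (hρ₀ : ρ₀ = θ / (θ - ϱ)) :
    0 < ρ₀ ∧ ρ₀ < 1 ∧
    ∃ lam₀ C : ℝ, 0 < lam₀ ∧ 1 ≤ C ∧
      ∀ v : EuclideanSpace ℝ (Fin 3), ∀ t : ℝ, 0 ≤ t →
        Real.exp (-(c * (1 + ‖v‖ ^ 2) ^ (ϱ / 2) * t)) * Real.exp (-(q * ‖v‖ ^ θ / 8)) ≤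
          C * Real.exp (-(lam₀ * t ^ ρ₀)) := by
  subst hρ₀
  have hθϱ : 0 < θ - ϱ := by linarith
  set lam := min (q / 8) (c * 2 ^ (ϱ / 2))
  have hlam : 0 < lam := lt_min (by positivity) (by positivity)
  refine ⟨div_pos hθ₁ hθϱ, (div_lt_one hθϱ).2 (by linarith), lam, exp lam, hlam,
    one_le_exp hlam.le, fun v t ht => ?_⟩
  have key := mul_rpow_le_collision_freq_mul_add hϱ₂.le hθ₁ hlam.le (min_le_left _ _)
    (min_le_right _ _) (norm_nonneg v) ht
  rw [← exp_add, ← exp_add, exp_le_exp]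
  linarith

/-- Trading exponential weight for time decay: for `-3 < ϱ < 0`, `0 < θ ≤ 2`, `q > 0`,
`c > 0` and `ρ₀ = θ/(θ - ϱ)`, there are `λ₀ > 0` and `C ≥ 1` with
`exp(-c(1+|v|²)^{ϱ/2} t) exp(-q|v|^θ/8) ≤ C exp(-λ₀ t^{ρ₀})` for all `v` and `t ≥ 0`. -/
theorem exp_collision_freq_weight_decay
    (ϱ θ q c ρ₀ : ℝ) (hϱ₁ : -3 < ϱ) (hϱ₂ : ϱ < 0) (hθ₁ : 0 < θ) (hθ₂ : θ ≤ 2)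
    (hq : 0 < q) (hc : 0 < c) (hρ₀ : ρ₀ = θ / (θ - ϱ)) :
    0 < ρ₀ ∧ ρ₀ < 1 ∧
    ∃ lam₀ C : ℝ, 0 < lam₀ ∧ 1 ≤ C ∧
      ∀ v : EuclideanSpace ℝ (Fin 3), ∀ t : ℝ, 0 ≤ t →
        Real.exp (-(c * (1 + ‖v‖ ^ 2) ^ (ϱ / 2) * t)) * Real.exp (-(q * ‖v‖ ^ θ / 8)) ≤
          C * Real.exp (-(lam₀ * t ^ ρ₀)) :=
  exp_collision_freq_weight_decay_general ϱ θ q c ρ₀ hϱ₂ hθ₁ hq hc hρ₀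
end

section
/- Let −3 < ϱ < 0, 0 < θ ≤ 2, q > 0, 0 < ϑ < −θ/ϱ and c > 0, and set ρ₁ = (θ + ϑϱ)/(θ − ϱ), so 0 < ρ₁ < 1. Define ν̃(v,t) = c(1+|v|²)^{ϱ/2} + ϑ q |v|^θ/(8(1+t)^{ϑ+1}). Then there exist λ₂ > 0 and C ≥ 1 such that for all v ∈ ℝ³ and all 0 ≤ s ≤ t: exp(−∫ₛᵗ ν̃(v,τ) dτ) ≤ C · exp(−λ₂ (t^{ρ₁} − s^{ρ₁})). -/
/-!
Balancing the two terms of `ν̃` at the threshold `|v| = R(τ) := (1+τ)^((ϑ+1)/(θ-ϱ))` gives the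
pointwise bound `ν̃(v,τ) ≥ λ (1+τ)^(ρ₁-1)` with `λ = min(c 2^(ϱ/2), ϑq/8)`: below the threshold the
soft-potential term is at least `c 2^(ϱ/2) R(τ)^ϱ`, above it the weight term is at least
`(ϑq/8) R(τ)^ϱ`, and `R(τ)^ϱ = (1+τ)^(ρ₁-1)`. Integrating gives
`∫ₛᵗ ν̃ ≥ (λ/ρ₁)((1+t)^ρ₁ - (1+s)^ρ₁)`, and subadditivity of `x ↦ x^ρ₁` turns this into `(λ/ρ₁)(t^ρ₁ - s^ρ₁) - λ/ρ₁`, so `C = exp(λ/ρ₁)` works.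
-/

open Real Set intervalIntegral

lemma decay_exponent_pos {ϱ θ ϑ : ℝ} (hϱ : ϱ < 0) (hθ : 0 < θ) (hϑ : ϑ < -θ / ϱ) :
    0 < (θ + ϑ * ϱ) / (θ - ϱ) :=
  div_pos (by linarith [(lt_div_iff_of_neg hϱ).1 hϑ]) (by linarith)

lemma decay_exponent_lt_one {ϱ θ ϑ : ℝ} (hϱ : ϱ < 0) (hθ : 0 < θ) (hϑ : -1 < ϑ) :
    (θ + ϑ * ϱ) / (θ - ϱ) < 1 :=
  (div_lt_one (by linarith)).2 (by nlinarith)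

lemma min_mul_rpow_le_add {R r c k ϱ θ : ℝ} (hR : 1 ≤ R) (hr : 0 ≤ r) (hc : 0 ≤ c)
    (hk : 0 ≤ k) (hϱ : ϱ ≤ 0) (hθ : 0 ≤ θ) :
    min (c * 2 ^ (ϱ / 2)) k * R ^ ϱ ≤ c * (1 + r ^ 2) ^ (ϱ / 2) + k * r ^ θ / R ^ (θ - ϱ) := by
  have hR0 : 0 < R := by linarith
  rcases le_total r R with hrR | hRr
  · have h2R : (2 * R ^ 2) ^ (ϱ / 2) = 2 ^ (ϱ / 2) * R ^ ϱ := by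
      rw [mul_rpow zero_le_two (by positivity), ← rpow_natCast R 2, ← rpow_mul hR0.le]
      congr 2; push_cast; ring
    have h1r : (2 * R ^ 2) ^ (ϱ / 2) ≤ (1 + r ^ 2) ^ (ϱ / 2) :=
      rpow_le_rpow_of_nonpos (by positivity) (by nlinarith) (by linarith)
    calc min (c * 2 ^ (ϱ / 2)) k * R ^ ϱ ≤ c * 2 ^ (ϱ / 2) * R ^ ϱ := by
          gcongr; exact min_le_left _ _
      _ ≤ c * (1 + r ^ 2) ^ (ϱ / 2) := by rw [mul_assoc, ← h2R]; gcongr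
      _ ≤ _ := le_add_of_nonneg_right (by positivity)
  · have hRθ : R ^ ϱ = R ^ θ / R ^ (θ - ϱ) := by rw [← rpow_sub hR0]; ring_nf
    calc min (c * 2 ^ (ϱ / 2)) k * R ^ ϱ ≤ k * (R ^ θ / R ^ (θ - ϱ)) := by
          rw [← hRθ]; gcongr; exact min_le_right _ _
      _ ≤ k * r ^ θ / R ^ (θ - ϱ) := by rw [mul_div_assoc]; gcongr
      _ ≤ _ := le_add_of_nonneg_left (by positivity)

lemma integral_one_add_rpow_sub_one {ρ : ℝ} (hρ : 0 < ρ) (s t : ℝ) :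
    ∫ τ in s..t, (1 + τ) ^ (ρ - 1) = ((1 + t) ^ ρ - (1 + s) ^ ρ) / ρ := by
  rw [integral_comp_add_left (fun x => x ^ (ρ - 1)), integral_rpow (Or.inl (by linarith)),
    sub_add_cancel]

lemma rpow_sub_rpow_sub_one_le {s t ρ : ℝ} (hs : 0 ≤ s) (hst : s ≤ t) (hρ₀ : 0 ≤ ρ)
    (hρ₁ : ρ ≤ 1) : t ^ ρ - s ^ ρ - 1 ≤ (1 + t) ^ ρ - (1 + s) ^ ρ := by
  have hs' := rpow_add_le_add_rpow zero_le_one hs hρ₀ hρ₁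
  have ht : t ^ ρ ≤ (1 + t) ^ ρ := rpow_le_rpow (by linarith) (by linarith) hρ₀
  rw [one_rpow] at hs'
  linarith

lemma min_mul_rpow_le_modified_collision_frequency {ϱ θ q ϑ c ρ r τ : ℝ} (hϱ : ϱ < 0)
    (hθ : 0 < θ) (hq : 0 ≤ q) (hϑ : 0 ≤ ϑ) (hc : 0 ≤ c) (hρ : ρ = (θ + ϑ * ϱ) / (θ - ϱ))
    (hr : 0 ≤ r) (hτ : 0 ≤ τ) :
    min (c * 2 ^ (ϱ / 2)) (ϑ * q / 8) * (1 + τ) ^ (ρ - 1) ≤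
      c * (1 + r ^ 2) ^ (ϱ / 2) + ϑ * q * r ^ θ / (8 * (1 + τ) ^ (ϑ + 1)) := by
  have hθϱ : 0 < θ - ϱ := by linarith
  have key := min_mul_rpow_le_add (R := (1 + τ) ^ ((ϑ + 1) / (θ - ϱ)))
    (one_le_rpow (by linarith) (by positivity))
    hr hc (by positivity : 0 ≤ ϑ * q / 8) hϱ.le hθ.le
  rw [← rpow_mul (by linarith), ← rpow_mul (by linarith),
    show (ϑ + 1) / (θ - ϱ) * ϱ = ρ - 1 by rw [hρ]; field_simp; ring,
    div_mul_cancel₀ _ hθϱ.ne'] at key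
  convert key using 2
  ring

lemma min_div_mul_sub_le_integral_modified_collision_frequency {ϱ θ q ϑ c ρ r s t : ℝ}
    (hϱ : ϱ < 0) (hθ : 0 < θ) (hq : 0 ≤ q) (hϑ : 0 ≤ ϑ) (hc : 0 ≤ c)
    (hρ : ρ = (θ + ϑ * ϱ) / (θ - ϱ)) (hρ₀ : 0 < ρ) (hr : 0 ≤ r) (hs : 0 ≤ s) (hst : s ≤ t) :
    min (c * 2 ^ (ϱ / 2)) (ϑ * q / 8) / ρ * ((1 + t) ^ ρ - (1 + s) ^ ρ) ≤
      ∫ τ in s..t, (c * (1 + r ^ 2) ^ (ϱ / 2) + ϑ * q * r ^ θ / (8 * (1 + τ) ^ (ϑ + 1))) := by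
  have hpos : ∀ x ∈ uIcc s t, 0 < 1 + x := fun x hx => by
    rw [uIcc_of_le hst] at hx; linarith [hx.1]
  calc _ = ∫ τ in s..t, min (c * 2 ^ (ϱ / 2)) (ϑ * q / 8) * (1 + τ) ^ (ρ - 1) := by
        rw [integral_const_mul, integral_one_add_rpow_sub_one hρ₀]; ring
    _ ≤ _ := by
      refine integral_mono_on hst ?_ ?_ fun τ hτ =>
        min_mul_rpow_le_modified_collision_frequency hϱ hθ hq hϑ hc hρ hr (hs.trans hτ.1)
      all_goals
        refine ContinuousOn.intervalIntegrable fun x hx => ContinuousAt.continuousWithinAt ?_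
        have hx := hpos x hx
        fun_prop (disch := first | positivity | exact Or.inl hx.ne')

theorem modified_collision_frequency_semigroup_decay_general
    (ϱ θ q ϑ c ρ₁ : ℝ) (hϱ₂ : ϱ < 0) (hθ₁ : 0 < θ)
    (hq : 0 < q) (hϑ₁ : 0 < ϑ) (hϑ₂ : ϑ < -θ / ϱ) (hc : 0 < c)
    (hρ₁ : ρ₁ = (θ + ϑ * ϱ) / (θ - ϱ)) :
    0 < ρ₁ ∧ ρ₁ < 1 ∧
    ∃ lam₂ C : ℝ, 0 < lam₂ ∧ 1 ≤ C ∧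
      ∀ v : EuclideanSpace ℝ (Fin 3), ∀ s t : ℝ, 0 ≤ s → s ≤ t →
        Real.exp (-(∫ τ in s..t,
            (c * (1 + ‖v‖ ^ 2) ^ (ϱ / 2) + ϑ * q * ‖v‖ ^ θ / (8 * (1 + τ) ^ (ϑ + 1))))) ≤
          C * Real.exp (-(lam₂ * (t ^ ρ₁ - s ^ ρ₁))) := by
  have hρ_pos : 0 < ρ₁ := hρ₁ ▸ decay_exponent_pos hϱ₂ hθ₁ hϑ₂
  have hρ_lt : ρ₁ < 1 := hρ₁ ▸ decay_exponent_lt_one hϱ₂ hθ₁ (by linarith)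
  have hlam : 0 < min (c * 2 ^ (ϱ / 2)) (ϑ * q / 8) := lt_min (by positivity) (by positivity)
  set lam₂ := min (c * 2 ^ (ϱ / 2)) (ϑ * q / 8) / ρ₁
  have hlam₂ : 0 < lam₂ := div_pos hlam hρ_pos
  refine ⟨hρ_pos, hρ_lt, lam₂, exp lam₂, hlam₂, one_le_exp hlam₂.le, fun v s t hs hst => ?_⟩
  have hintegral := min_div_mul_sub_le_integral_modified_collision_frequency hϱ₂ hθ₁ hq.le
    hϑ₁.le hc.le hρ₁ hρ_pos (norm_nonneg v) hs hst
  have hincrement := mul_le_mul_of_nonneg_left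
    (rpow_sub_rpow_sub_one_le hs hst hρ_pos.le hρ_lt.le) hlam₂.le
  rw [← exp_add]
  exact exp_le_exp.2 (by linarith)

/-- Decay of the semigroup generated by the modified collision frequency:
with `ν̃(v,t) = c(1+|v|²)^{ϱ/2} + ϑ q |v|^θ/(8(1+t)^{ϑ+1})` and
`ρ₁ = (θ + ϑϱ)/(θ - ϱ)`, there are `λ₂ > 0` and `C ≥ 1` such that
`exp(-∫ₛᵗ ν̃(v,τ) dτ) ≤ C exp(-λ₂(t^{ρ₁} - s^{ρ₁}))` for `0 ≤ s ≤ t`. -/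
theorem modified_collision_frequency_semigroup_decay
    (ϱ θ q ϑ c ρ₁ : ℝ) (hϱ₁ : -3 < ϱ) (hϱ₂ : ϱ < 0) (hθ₁ : 0 < θ) (hθ₂ : θ ≤ 2)
    (hq : 0 < q) (hϑ₁ : 0 < ϑ) (hϑ₂ : ϑ < -θ / ϱ) (hc : 0 < c)
    (hρ₁ : ρ₁ = (θ + ϑ * ϱ) / (θ - ϱ)) :
    0 < ρ₁ ∧ ρ₁ < 1 ∧
    ∃ lam₂ C : ℝ, 0 < lam₂ ∧ 1 ≤ C ∧
      ∀ v : EuclideanSpace ℝ (Fin 3), ∀ s t : ℝ, 0 ≤ s → s ≤ t →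
        Real.exp (-(∫ τ in s..t,
            (c * (1 + ‖v‖ ^ 2) ^ (ϱ / 2) + ϑ * q * ‖v‖ ^ θ / (8 * (1 + τ) ^ (ϑ + 1))))) ≤
          C * Real.exp (-(lam₂ * (t ^ ρ₁ - s ^ ρ₁))) :=
  modified_collision_frequency_semigroup_decay_general ϱ θ q ϑ c ρ₁ hϱ₂ hθ₁ hq hϑ₁ hϑ₂ hc hρ₁
end

section
/- Let 0 < q̃ < s₀ < 1. Then there exist ε₀ > 0 and C > 0 such that for all 0 ≤ ε ≤ ε₀, all v ∈ ℝ³ and all η ∈ ℝ³ with η ≠ 0: −((s₀−8ε)/8)|η|² − ((s₀−8ε)/8)·(|η|² − 2 v·η)²/|η|² − (q̃/4)(|η|² − 2 v·η) ≤ −C(|η|²/2 + |v·η|). (Negative definiteness of the perturbed quadratic form in |η| and (v·η)/|η| appearing in the weighted kernel estimate for θ = 2.) -/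
/-! With `A = ‖η‖²`, `t = A - 2 v·η` and `s = s₀ - 8ε`, the form equals
`-((s - q̃)/8)(A² + t²)/A - (q̃/8)(A + t)²/A`. The second term is nonpositive, and
`A/2 + |v·η| ≤ (5/4)(A² + t²)/A`, so the form is at most `-((s - q̃)/10)(A/2 + |v·η|)`;
taking `ε ≤ (s₀ - q̃)/16` keeps `s - q̃ ≥ (s₀ - q̃)/2`. -/

theorem perturbed_form_eq (s q A t : ℝ) (hA : A ≠ 0) :
    -(s / 8) * A - (s / 8) * t ^ 2 / A - (q / 4) * t =
      -((s - q) / 8) * ((A ^ 2 + t ^ 2) / A) - (q / 8) * ((A + t) ^ 2 / A) := by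
  field_simp
  ring

theorem half_add_abs_le_sum_sq_div (A B : ℝ) (hA : 0 < A) :
    A / 2 + |B| ≤ 5 / 4 * ((A ^ 2 + (A - 2 * B) ^ 2) / A) := by
  rw [mul_div_assoc', le_div_iff₀ hA]
  rcases le_total B 0 with hB | hB
  · rw [abs_of_nonpos hB]
    nlinarith [sq_nonneg (A + 2 * B)]
  · rw [abs_of_nonneg hB]
    nlinarith [sq_nonneg (A - 4 * B)]

theorem perturbed_form_le (s q A B : ℝ) (hq : 0 ≤ q) (hqs : q ≤ s) (hA : 0 < A) :
    -(s / 8) * A - (s / 8) * (A - 2 * B) ^ 2 / A - (q / 4) * (A - 2 * B) ≤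
      -((s - q) / 10) * (A / 2 + |B|) := by
  rw [perturbed_form_eq s q A _ hA.ne']
  have hcross : 0 ≤ q / 8 * ((A + (A - 2 * B)) ^ 2 / A) := by positivity
  have hbound : (s - q) / 10 * (A / 2 + |B|) ≤ (s - q) / 8 * ((A ^ 2 + (A - 2 * B) ^ 2) / A) :=
    calc (s - q) / 10 * (A / 2 + |B|)
        ≤ (s - q) / 10 * (5 / 4 * ((A ^ 2 + (A - 2 * B) ^ 2) / A)) :=
          mul_le_mul_of_nonneg_left (half_add_abs_le_sum_sq_div A B hA) (by linarith)
      _ = (s - q) / 8 * ((A ^ 2 + (A - 2 * B) ^ 2) / A) := by ring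
  linarith

theorem perturbed_quadratic_form_neg_def_general
    (qt s₀ : ℝ) (hq₁ : 0 < qt) (hq₂ : qt < s₀) :
    ∃ ε₀ C : ℝ, 0 < ε₀ ∧ 0 < C ∧
      ∀ ε : ℝ, 0 ≤ ε → ε ≤ ε₀ →
        ∀ v η : EuclideanSpace ℝ (Fin 3), η ≠ 0 →
          -((s₀ - 8 * ε) / 8) * ‖η‖ ^ 2
            - ((s₀ - 8 * ε) / 8) * (‖η‖ ^ 2 - 2 * (inner ℝ v η : ℝ)) ^ 2 / ‖η‖ ^ 2
            - (qt / 4) * (‖η‖ ^ 2 - 2 * (inner ℝ v η : ℝ)) ≤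
          -C * (‖η‖ ^ 2 / 2 + |(inner ℝ v η : ℝ)|) := by
  refine ⟨(s₀ - qt) / 16, (s₀ - qt) / 20, by linarith, by linarith, ?_⟩
  intro ε hε hε₀ v η hη
  have hA : 0 < ‖η‖ ^ 2 := by positivity
  calc _ ≤ -((s₀ - 8 * ε - qt) / 10) * (‖η‖ ^ 2 / 2 + |(inner ℝ v η : ℝ)|) :=
        perturbed_form_le _ _ _ _ hq₁.le (by linarith) hA
    _ ≤ _ := mul_le_mul_of_nonneg_right (by linarith) (by positivity)

/-- Negative definiteness of the perturbed quadratic form (case `θ = 2`):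
for `0 < q̃ < s₀ < 1` there are `ε₀ > 0` and `C > 0` such that for `0 ≤ ε ≤ ε₀`,
all `v` and all `η ≠ 0`,
`-((s₀-8ε)/8)|η|² - ((s₀-8ε)/8)(|η|² - 2v·η)²/|η|² - (q̃/4)(|η|² - 2v·η)
  ≤ -C(|η|²/2 + |v·η|)`. -/
theorem perturbed_quadratic_form_neg_def
    (qt s₀ : ℝ) (hq₁ : 0 < qt) (hq₂ : qt < s₀) (hs₀ : s₀ < 1) :
    ∃ ε₀ C : ℝ, 0 < ε₀ ∧ 0 < C ∧
      ∀ ε : ℝ, 0 ≤ ε → ε ≤ ε₀ →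
        ∀ v η : EuclideanSpace ℝ (Fin 3), η ≠ 0 →
          -((s₀ - 8 * ε) / 8) * ‖η‖ ^ 2
            - ((s₀ - 8 * ε) / 8) * (‖η‖ ^ 2 - 2 * (inner ℝ v η : ℝ)) ^ 2 / ‖η‖ ^ 2
            - (qt / 4) * (‖η‖ ^ 2 - 2 * (inner ℝ v η : ℝ)) ≤
          -C * (‖η‖ ^ 2 / 2 + |(inner ℝ v η : ℝ)|) :=
  perturbed_quadratic_form_neg_def_general qt s₀ hq₁ hq₂
end

section
/- Let 0 < θ < 2, 0 < s₀ < 1 and A > 0. Then there exist ε₀ > 0, C > 0 and C′ > 0 such that for all 0 ≤ ε ≤ ε₀, all v ∈ ℝ³ and all η ∈ ℝ³ with η ≠ 0: −((s₀−8ε)/8)|η|² − (s₀/8)·(|η|² − 2 v·η)²/|η|² + A|η|^θ ≤ −C(|η|²/2 + |v·η|) + C′. (Negative definiteness, up to an additive constant, of the perturbed quadratic form appearing in the weighted kernel estimate for 0 < θ < 2.) -/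
/-!
Write `x = |η|²` and `t = v·η`. Since `|t| x ≤ (x - 2t)² + x²`, the term `(x - 2t)²/x` controls
`|t|` up to a multiple of `x`, so for `ε ≤ s₀/32` the quadratic part is bounded by
`-(s₀/32)(x + |t|)`. The perturbation is absorbed into a small multiple of `x` plus a constant:
splitting at a radius `R`, `r^θ ≤ R^θ + R^(θ-2) r²`, and `R^(θ-2) → 0` because `θ < 2`.
-/

open Filter

lemma abs_mul_le_sq_sub_add_sq (x t : ℝ) : |t| * x ≤ (x - 2 * t) ^ 2 + x ^ 2 := by
  rcases abs_cases t with ⟨ht, -⟩ | ⟨ht, -⟩ <;> rw [ht] <;>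
    nlinarith [sq_nonneg (2 * t - 5 / 4 * x), sq_nonneg (2 * t + 3 / 4 * x)]

lemma abs_le_sq_sub_div_add {x : ℝ} (hx : 0 < x) (t : ℝ) :
    |t| ≤ (x - 2 * t) ^ 2 / x + x := by
  rw [div_add' _ _ _ hx.ne', le_div_iff₀ hx, ← sq]
  exact abs_mul_le_sq_sub_add_sq x t

lemma rpow_le_rpow_add_rpow_sub_two_mul_sq {θ r R : ℝ} (hθ₀ : 0 ≤ θ) (hθ₂ : θ ≤ 2)
    (hr : 0 ≤ r) (hR : 0 < R) :
    r ^ θ ≤ R ^ θ + R ^ (θ - 2) * r ^ 2 := by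
  rcases le_or_gt r R with hrR | hRr
  · have hmono := Real.rpow_le_rpow hr hrR hθ₀
    have hrest : 0 ≤ R ^ (θ - 2) * r ^ 2 := by positivity
    linarith
  · have hr' : 0 < r := hR.trans hRr
    have hsplit : r ^ θ = r ^ (θ - 2) * r ^ 2 := by
      rw [← Real.rpow_natCast, ← Real.rpow_add hr']
      norm_num
    have hanti := Real.rpow_le_rpow_of_nonpos hR hRr.le (by linarith : θ - 2 ≤ 0)
    have hrest : 0 ≤ R ^ θ := by positivity
    rw [hsplit]
    nlinarith [sq_nonneg r]

lemma exists_rpow_le_mul_sq_add {θ : ℝ} (hθ₀ : 0 ≤ θ) (hθ₂ : θ < 2) {δ : ℝ} (hδ : 0 < δ) :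
    ∃ K, 0 < K ∧ ∀ r, 0 ≤ r → r ^ θ ≤ δ * r ^ 2 + K := by
  have hdecay : Tendsto (fun R : ℝ => R ^ (θ - 2)) atTop (nhds 0) := by
    simpa using tendsto_rpow_neg_atTop (by linarith : 0 < 2 - θ)
  obtain ⟨R, hRδ, hR⟩ :=
    ((hdecay.eventually (ge_mem_nhds hδ)).and (eventually_gt_atTop 0)).exists
  refine ⟨R ^ θ, Real.rpow_pos_of_pos hR θ, fun r hr => ?_⟩
  have hsplit := rpow_le_rpow_add_rpow_sub_two_mul_sq hθ₀ hθ₂.le hr hR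
  nlinarith [sq_nonneg r]

theorem perturbed_quadratic_form_neg_def_theta_lt_two_general
    (θ s₀ A : ℝ) (hθ₁ : 0 < θ) (hθ₂ : θ < 2) (hs₁ : 0 < s₀) (hA : 0 < A) :
    ∃ ε₀ C C' : ℝ, 0 < ε₀ ∧ 0 < C ∧ 0 < C' ∧
      ∀ ε : ℝ, 0 ≤ ε → ε ≤ ε₀ →
        ∀ v η : EuclideanSpace ℝ (Fin 3), η ≠ 0 →
          -((s₀ - 8 * ε) / 8) * ‖η‖ ^ 2
            - (s₀ / 8) * (‖η‖ ^ 2 - 2 * (inner ℝ v η : ℝ)) ^ 2 / ‖η‖ ^ 2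
            + A * ‖η‖ ^ θ ≤
          -C * (‖η‖ ^ 2 / 2 + |(inner ℝ v η : ℝ)|) + C' := by
  obtain ⟨K, hK, hpow⟩ := exists_rpow_le_mul_sq_add hθ₁.le hθ₂ (by positivity : 0 < s₀ / (32 * A))
  refine ⟨s₀ / 32, s₀ / 32, A * K, by positivity, by positivity, by positivity, ?_⟩
  intro ε hε hεs v η hη
  set t : ℝ := inner ℝ v η
  set x : ℝ := ‖η‖ ^ 2
  have hx : 0 < x := by positivity
  rw [mul_div_assoc]
  set q : ℝ := (x - 2 * t) ^ 2 / x
  have hq : 0 ≤ q := by positivity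
  have hpert : A * ‖η‖ ^ θ ≤ s₀ / 32 * x + A * K := by
    have hAδ : A * (s₀ / (32 * A)) = s₀ / 32 := by field_simp
    calc A * ‖η‖ ^ θ ≤ A * (s₀ / (32 * A) * x + K) :=
          mul_le_mul_of_nonneg_left (hpow ‖η‖ (norm_nonneg η)) hA.le
      _ = s₀ / 32 * x + A * K := by rw [mul_add, ← mul_assoc, hAδ]
  have hcross : s₀ / 32 * |t| ≤ s₀ / 32 * q + s₀ / 32 * x := by
    rw [← mul_add]; exact mul_le_mul_of_nonneg_left (abs_le_sq_sub_div_add hx t) (by positivity)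
  have hq_weight : s₀ / 32 * q ≤ s₀ / 8 * q := by gcongr; norm_num
  have hε_weight : ε * x ≤ s₀ / 32 * x := by gcongr
  have hsx : 0 ≤ s₀ * x := by positivity
  linarith

/-- Negative definiteness up to a constant of the perturbed quadratic form
(case `0 < θ < 2`): for `0 < θ < 2`, `0 < s₀ < 1` and `A > 0` there are
`ε₀ > 0`, `C > 0`, `C' > 0` such that for `0 ≤ ε ≤ ε₀`, all `v` and all `η ≠ 0`,
`-((s₀-8ε)/8)|η|² - (s₀/8)(|η|² - 2v·η)²/|η|² + A|η|^θ
  ≤ -C(|η|²/2 + |v·η|) + C'`. -/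
theorem perturbed_quadratic_form_neg_def_theta_lt_two
    (θ s₀ A : ℝ) (hθ₁ : 0 < θ) (hθ₂ : θ < 2) (hs₁ : 0 < s₀) (hs₂ : s₀ < 1) (hA : 0 < A) :
    ∃ ε₀ C C' : ℝ, 0 < ε₀ ∧ 0 < C ∧ 0 < C' ∧
      ∀ ε : ℝ, 0 ≤ ε → ε ≤ ε₀ →
        ∀ v η : EuclideanSpace ℝ (Fin 3), η ≠ 0 →
          -((s₀ - 8 * ε) / 8) * ‖η‖ ^ 2
            - (s₀ / 8) * (‖η‖ ^ 2 - 2 * (inner ℝ v η : ℝ)) ^ 2 / ‖η‖ ^ 2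
            + A * ‖η‖ ^ θ ≤
          -C * (‖η‖ ^ 2 / 2 + |(inner ℝ v η : ℝ)|) + C' :=
  perturbed_quadratic_form_neg_def_theta_lt_two_general θ s₀ A hθ₁ hθ₂ hs₁ hA
end

section
/- Let −3 < ϱ < 0 and a > 0. Then there exists C > 0 such that for every v ∈ ℝ³: ∫_{ℝ³} |u − v|^ϱ e^{−a|u|²} du ≤ C(1+|v|)^ϱ. -/
/-!
Peetre's inequality `1 + ‖v‖ ≤ (1 + ‖u - v‖) (1 + ‖u‖)` trades the weight `(1 + ‖v‖) ^ ϱ` for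
`(1 + ‖u - v‖) ^ ϱ (1 + ‖u‖) ^ (-ϱ)`. The Gaussian absorbs `(1 + ‖u‖) ^ (-ϱ)` at the cost of halving
its rate, and `‖w‖ ^ ϱ (1 + ‖w‖) ^ (-ϱ)` is bounded outside the unit ball and integrable inside it
since `ϱ > -3`. The integral is thus dominated by `(1 + ‖v‖) ^ ϱ` times the integral of a translate
of an integrable function plus a Gaussian, which does not depend on `v`.
-/

open MeasureTheory Real Metric Module

theorem integrableOn_ball_norm_rpow {E : Type*} [NormedAddCommGroup E] [NormedSpace ℝ E]
    [FiniteDimensional ℝ E] [MeasurableSpace E] [BorelSpace E] (μ : Measure E)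
    [μ.IsAddHaarMeasure] (hd : 1 ≤ finrank ℝ E) {ϱ : ℝ} (hϱ : -(finrank ℝ E : ℝ) < ϱ)
    (r : ℝ) : IntegrableOn (fun x : E => ‖x‖ ^ ϱ) (ball 0 r) μ :=
  integrableOn_ball_of_norm_le_rpow (C := 1) (α := -ϱ) hd (by linarith)
    (Filter.Eventually.of_forall fun x => by
      rw [neg_neg, one_mul, norm_of_nonneg (rpow_nonneg (norm_nonneg x) ϱ)])
    (by fun_prop : Measurable fun x : E => ‖x‖ ^ ϱ).aestronglyMeasurable

section Gaussian

variable {V : Type*} [NormedAddCommGroup V] [InnerProductSpace ℝ V] [FiniteDimensional ℝ V]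
  [MeasurableSpace V] [BorelSpace V]

theorem integral_exp_neg_mul_sq_norm_pos {b : ℝ} (hb : 0 < b) :
    0 < ∫ v : V, exp (-b * ‖v‖ ^ 2) := by
  rw [GaussianFourier.integral_rexp_neg_mul_sq_norm hb]
  positivity

theorem integrable_exp_neg_mul_sq_norm {b : ℝ} (hb : 0 < b) :
    Integrable fun v : V => exp (-b * ‖v‖ ^ 2) :=
  Integrable.of_integral_ne_zero (integral_exp_neg_mul_sq_norm_pos hb).ne'

end Gaussian

theorem one_add_rpow_mul_exp_neg_mul_sq_le {s a t : ℝ} (hs : 0 ≤ s) (ha : 0 < a) (ht : 0 ≤ t) :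
    (1 + t) ^ s * exp (-a * t ^ 2) ≤ exp (s ^ 2 / (2 * a)) * exp (-(a / 2) * t ^ 2) := by
  have hlin : (1 + t) ^ s ≤ exp (s * t) := by
    calc (1 + t) ^ s ≤ exp t ^ s :=
          rpow_le_rpow (by positivity) (by linarith [add_one_le_exp t]) hs
      _ = exp (s * t) := by rw [← exp_mul, mul_comm]
  calc (1 + t) ^ s * exp (-a * t ^ 2) ≤ exp (s * t) * exp (-a * t ^ 2) := by gcongr
    _ ≤ exp (s ^ 2 / (2 * a)) * exp (-(a / 2) * t ^ 2) := by
      rw [← exp_add, ← exp_add, exp_le_exp]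
      have hsq : 0 ≤ (s - a * t) ^ 2 / (2 * a) := by positivity
      field_simp at hsq ⊢
      nlinarith

section Pointwise

variable {E : Type*} [SeminormedAddCommGroup E] {ϱ : ℝ}

theorem norm_rpow_le_indicator_add_one (hϱ : ϱ ≤ 0) (x : E) :
    ‖x‖ ^ ϱ ≤ 2 ^ (-ϱ) * (1 + ‖x‖) ^ ϱ * ((ball 0 1).indicator (‖·‖ ^ ϱ) x + 1) := by
  have hhalf : 2 ^ (-ϱ) * (1 + ‖x‖) ^ ϱ = ((1 + ‖x‖) / 2) ^ ϱ := by
    rw [div_rpow (by positivity) zero_le_two, rpow_neg zero_le_two, div_eq_inv_mul]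
  rw [hhalf]
  by_cases hx : ‖x‖ < 1
  · rw [Set.indicator_of_mem (mem_ball_zero_iff.2 hx)]
    have : 1 ≤ ((1 + ‖x‖) / 2) ^ ϱ :=
      one_le_rpow_of_pos_of_le_one_of_nonpos (by positivity) (by linarith) hϱ
    nlinarith [rpow_nonneg (norm_nonneg x) ϱ]
  · rw [Set.indicator_of_notMem (by simpa using hx), zero_add, mul_one]
    exact rpow_le_rpow_of_nonpos (by positivity) (by linarith) hϱ

theorem one_add_norm_sub_rpow_le (hϱ : ϱ ≤ 0) (u v : E) :
    (1 + ‖u - v‖) ^ ϱ ≤ (1 + ‖v‖) ^ ϱ * (1 + ‖u‖) ^ (-ϱ) := by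
  have hpeetre : 1 + ‖v‖ ≤ (1 + ‖u - v‖) * (1 + ‖u‖) := by
    have := norm_sub_le u (u - v)
    rw [sub_sub_cancel] at this
    nlinarith [norm_nonneg u, norm_nonneg (u - v)]
  have := rpow_le_rpow_of_nonpos (by positivity) hpeetre hϱ
  rw [mul_rpow (by positivity) (by positivity)] at this
  rwa [rpow_neg (by positivity), le_mul_inv_iff₀ (by positivity)]

theorem norm_sub_rpow_mul_exp_neg_mul_sq_le {a : ℝ} (hϱ : ϱ ≤ 0) (ha : 0 < a) (u v : E) :
    ‖u - v‖ ^ ϱ * exp (-a * ‖u‖ ^ 2) ≤ 2 ^ (-ϱ) * exp (ϱ ^ 2 / (2 * a)) * (1 + ‖v‖) ^ ϱ *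
      ((ball 0 1).indicator (‖·‖ ^ ϱ) (u - v) + exp (-(a / 2) * ‖u‖ ^ 2)) := by
  set F := (ball (0 : E) 1).indicator (‖·‖ ^ ϱ) (u - v)
  have hF : 0 ≤ F := Set.indicator_nonneg (fun x _ => rpow_nonneg (norm_nonneg x) ϱ) _
  have hweight := one_add_rpow_mul_exp_neg_mul_sq_le (neg_nonneg.2 hϱ) ha (norm_nonneg u)
  rw [neg_sq] at hweight
  have hG : exp (-(a / 2) * ‖u‖ ^ 2) ≤ 1 := exp_le_one_iff.2 (by nlinarith [sq_nonneg ‖u‖])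
  calc ‖u - v‖ ^ ϱ * exp (-a * ‖u‖ ^ 2)
      ≤ 2 ^ (-ϱ) * (1 + ‖u - v‖) ^ ϱ * (F + 1) * exp (-a * ‖u‖ ^ 2) := by
        gcongr; exact norm_rpow_le_indicator_add_one hϱ (u - v)
    _ ≤ 2 ^ (-ϱ) * ((1 + ‖v‖) ^ ϱ * (1 + ‖u‖) ^ (-ϱ)) * (F + 1) * exp (-a * ‖u‖ ^ 2) := by
        gcongr; exact one_add_norm_sub_rpow_le hϱ u v
    _ = 2 ^ (-ϱ) * (1 + ‖v‖) ^ ϱ * (F + 1) * ((1 + ‖u‖) ^ (-ϱ) * exp (-a * ‖u‖ ^ 2)) := by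
        ring
    _ ≤ 2 ^ (-ϱ) * (1 + ‖v‖) ^ ϱ * (F + 1) *
          (exp (ϱ ^ 2 / (2 * a)) * exp (-(a / 2) * ‖u‖ ^ 2)) := by
        gcongr
    _ = 2 ^ (-ϱ) * exp (ϱ ^ 2 / (2 * a)) * (1 + ‖v‖) ^ ϱ *
          ((F + 1) * exp (-(a / 2) * ‖u‖ ^ 2)) := by
        ring
    _ ≤ _ := by
        gcongr
        nlinarith [exp_pos (-(a / 2) * ‖u‖ ^ 2)]

end Pointwise

/-- Convolution bound for the soft potential: for `-3 < ϱ < 0` and `a > 0` there is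
`C > 0` such that `∫ |u - v|^ϱ e^{-a|u|²} du ≤ C (1+|v|)^ϱ` for every `v ∈ ℝ³`. -/
theorem soft_potential_gaussian_convolution_bound
    (ϱ a : ℝ) (hϱ₁ : -3 < ϱ) (hϱ₂ : ϱ < 0) (ha : 0 < a) :
    ∃ C : ℝ, 0 < C ∧
      ∀ v : EuclideanSpace ℝ (Fin 3),
        (∫ u : EuclideanSpace ℝ (Fin 3), ‖u - v‖ ^ ϱ * Real.exp (-a * ‖u‖ ^ 2)) ≤
          C * (1 + ‖v‖) ^ ϱ := by
  set F : EuclideanSpace ℝ (Fin 3) → ℝ := (ball 0 1).indicator (‖·‖ ^ ϱ)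
  set G : EuclideanSpace ℝ (Fin 3) → ℝ := fun u => exp (-(a / 2) * ‖u‖ ^ 2)
  have hF : Integrable F :=
    (integrableOn_ball_norm_rpow volume (by simp) (by simpa using hϱ₁) 1).integrable_indicator
      measurableSet_ball
  have hG : Integrable G := integrable_exp_neg_mul_sq_norm (by positivity)
  have hF_nonneg : 0 ≤ ∫ w, F w :=
    integral_nonneg (Set.indicator_nonneg fun x _ => rpow_nonneg (norm_nonneg x) ϱ)
  have hG_pos : 0 < ∫ u, G u := integral_exp_neg_mul_sq_norm_pos (by positivity)
  set K := 2 ^ (-ϱ) * exp (ϱ ^ 2 / (2 * a))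
  refine ⟨K * ((∫ w, F w) + ∫ u, G u), by positivity, fun v => ?_⟩
  calc (∫ u, ‖u - v‖ ^ ϱ * exp (-a * ‖u‖ ^ 2))
      ≤ ∫ u, K * (1 + ‖v‖) ^ ϱ * (F (u - v) + G u) :=
        integral_mono_of_nonneg (.of_forall fun u => by positivity)
          (((hF.comp_sub_right v).add hG).const_mul _)
          (.of_forall fun u => norm_sub_rpow_mul_exp_neg_mul_sq_le hϱ₂.le ha u v)
    _ = K * ((∫ w, F w) + ∫ u, G u) * (1 + ‖v‖) ^ ϱ := by
        rw [integral_const_mul, integral_add (hF.comp_sub_right v) hG,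
          integral_sub_right_eq_self F v]
        ring
end
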